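/- Let G be a connected graph of size q admitting a local antimagic labeling f (a bijection f : E → {1,…,q} such that adjacent vertices get distinct induced sums f⁺) whose induced vertex coloring uses exactly two colors x and y with x < y. Let X and Y be the sets of vertices with induced color x and y respectively. Then G is bipartite with bipartition (X, Y), |X| > |Y|, and x·|X| = y·|Y| = q(q+1)/2. -/
import Mathlib

theorem paper_stmt {V : Type*} [Fintype V] [DecidableEq V] (G : SimpleGraph V)
    [DecidableRel G.Adj] (hconn : G.Connected) (q : ℕ) (hq : G.edgeFinset.card = q)
    (f : Sym2 V → ℕ)
    (hbij : Set.BijOn f G.edgeSet (Set.Icc 1 q))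
    (fplus : V → ℕ)
    (hfplus : ∀ v : V, fplus v = ∑ e ∈ G.edgeFinset.filter (fun e => v ∈ e), f e)
    (hla : ∀ u v : V, G.Adj u v → fplus u ≠ fplus v)
    (x y : ℕ) (hxy : x < y)
    (hcolors : ∀ v : V, fplus v = x ∨ fplus v = y)
    (hxused : ∃ v : V, fplus v = x) (hyused : ∃ v : V, fplus v = y)
    (X Y : Finset V)
    (hX : X = Finset.univ.filter (fun v => fplus v = x))
    (hY : Y = Finset.univ.filter (fun v => fplus v = y)) :
    (∀ u v : V, G.Adj u v → ((u ∈ X ∧ v ∈ Y) ∨ (u ∈ Y ∧ v ∈ X))) ∧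
    Y.card < X.card ∧
    x * X.card = q * (q + 1) / 2 ∧ y * Y.card = q * (q + 1) / 2 := by
  -- bipartite structure
  have hbip : ∀ u v : V, G.Adj u v →
      (fplus u = x ∧ fplus v = y) ∨ (fplus u = y ∧ fplus v = x) := by
    intro u v huv
    have hne := hla u v huv
    rcases hcolors u with h1 | h1 <;> rcases hcolors v with h2 | h2
    · exact absurd (h1.trans h2.symm) hne
    · exact Or.inl ⟨h1, h2⟩
    · exact Or.inr ⟨h1, h2⟩
    · exact absurd (h1.trans h2.symm) hne
  -- q ≥ 1
  have hq1 : 1 ≤ q := by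
    by_contra h
    have hq0 : G.edgeFinset = ∅ := by
      rw [← Finset.card_eq_zero]; omega
    have hz : ∀ v : V, fplus v = 0 := by
      intro v; rw [hfplus, hq0]; simp
    obtain ⟨u, hu⟩ := hxused
    obtain ⟨w, hw⟩ := hyused
    rw [hz u] at hu; rw [hz w] at hw; omega
  -- generic sum-swapping lemma
  have key : ∀ s : Finset V, (∑ v ∈ s, fplus v) =
      ∑ e ∈ G.edgeFinset, (s.filter (fun v => v ∈ e)).card * f e := by
    intro s
    calc (∑ v ∈ s, fplus v)
        = ∑ v ∈ s, ∑ e ∈ G.edgeFinset, (if v ∈ e then f e else 0) := by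
          refine Finset.sum_congr rfl fun v _ => ?_
          rw [hfplus, Finset.sum_filter]
      _ = ∑ e ∈ G.edgeFinset, ∑ v ∈ s, (if v ∈ e then f e else 0) :=
          Finset.sum_comm
      _ = ∑ e ∈ G.edgeFinset, (s.filter (fun v => v ∈ e)).card * f e := by
          refine Finset.sum_congr rfl fun e _ => ?_
          rw [← Finset.sum_filter, Finset.sum_const, smul_eq_mul]
  -- each edge has exactly one endpoint in X, one in Y
  have hone : ∀ e ∈ G.edgeFinset, (X.filter (fun v => v ∈ e)).card = 1 ∧
      (Y.filter (fun v => v ∈ e)).card = 1 := by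
    intro e he
    rw [SimpleGraph.mem_edgeFinset] at he
    induction e with
    | h u v =>
      have hadj : G.Adj u v := he
      have huv : u ≠ v := hadj.ne
      rcases hbip u v hadj with ⟨h1, h2⟩ | ⟨h1, h2⟩
      · constructor
        · rw [Finset.card_eq_one]; refine ⟨u, ?_⟩
          ext w
          simp only [Finset.mem_filter, hX, Finset.mem_univ, true_and,
            Sym2.mem_iff, Finset.mem_singleton]
          constructor
          · rintro ⟨hw, rfl | rfl⟩
            · rfl
            · omega
          · rintro rfl; exact ⟨h1, Or.inl rfl⟩
        · rw [Finset.card_eq_one]; refine ⟨v, ?_⟩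
          ext w
          simp only [Finset.mem_filter, hY, Finset.mem_univ, true_and,
            Sym2.mem_iff, Finset.mem_singleton]
          constructor
          · rintro ⟨hw, rfl | rfl⟩
            · omega
            · rfl
          · rintro rfl; exact ⟨h2, Or.inr rfl⟩
      · constructor
        · rw [Finset.card_eq_one]; refine ⟨v, ?_⟩
          ext w
          simp only [Finset.mem_filter, hX, Finset.mem_univ, true_and,
            Sym2.mem_iff, Finset.mem_singleton]
          constructor
          · rintro ⟨hw, rfl | rfl⟩
            · omega
            · rfl
          · rintro rfl; exact ⟨h2, Or.inr rfl⟩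
        · rw [Finset.card_eq_one]; refine ⟨u, ?_⟩
          ext w
          simp only [Finset.mem_filter, hY, Finset.mem_univ, true_and,
            Sym2.mem_iff, Finset.mem_singleton]
          constructor
          · rintro ⟨hw, rfl | rfl⟩
            · rfl
            · omega
          · rintro rfl; exact ⟨h1, Or.inl rfl⟩
  set S := ∑ e ∈ G.edgeFinset, f e with hSdef
  -- sum over X and Y
  have hXsum : x * X.card = S := by
    have h1 : (∑ v ∈ X, fplus v) = S := by
      rw [key]
      refine Finset.sum_congr rfl fun e he => ?_
      rw [(hone e he).1, one_mul]
    have h2 : (∑ v ∈ X, fplus v) = x * X.card := by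
      rw [Finset.sum_congr rfl (fun v hv => ?_), Finset.sum_const, smul_eq_mul,
        Nat.mul_comm]
      rw [hX, Finset.mem_filter] at hv; exact hv.2
    omega
  have hYsum : y * Y.card = S := by
    have h1 : (∑ v ∈ Y, fplus v) = S := by
      rw [key]
      refine Finset.sum_congr rfl fun e he => ?_
      rw [(hone e he).2, one_mul]
    have h2 : (∑ v ∈ Y, fplus v) = y * Y.card := by
      rw [Finset.sum_congr rfl (fun v hv => ?_), Finset.sum_const, smul_eq_mul,
        Nat.mul_comm]
      rw [hY, Finset.mem_filter] at hv; exact hv.2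
    omega
  -- S * 2 = q * (q+1)
  have hS2 : S * 2 = q * (q + 1) := by
    have hb : S = ∑ i ∈ Finset.Icc 1 q, i := by
      refine Finset.sum_bij (fun e _ => f e) ?_ ?_ ?_ ?_
      · intro e he
        rw [SimpleGraph.mem_edgeFinset] at he
        have := hbij.mapsTo he
        simpa [Finset.mem_Icc, Set.mem_Icc] using this
      · intro e1 he1 e2 he2 hfe
        exact hbij.injOn (by simpa using he1) (by simpa using he2) hfe
      · intro i hi
        rw [Finset.mem_Icc] at hi
        obtain ⟨e, he, hfe⟩ := hbij.surjOn (Set.mem_Icc.mpr hi)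
        exact ⟨e, by simpa using he, hfe⟩
      · intro e _; rfl
    have hIcc : ∑ i ∈ Finset.Icc 1 q, i = ∑ i ∈ Finset.range (q + 1), i := by
      rw [Finset.range_eq_Ico, ← Finset.Ico_add_one_right_eq_Icc]
      rw [← Finset.sum_Ico_consecutive _ (Nat.zero_le 1) (by omega)]
      simp
    rw [hb, hIcc, Finset.sum_range_id_mul_two]
    simp [Nat.mul_comm]
  -- wrap up
  have hSpos : 0 < S := by nlinarith
  have hxpos : 0 < x := by
    rcases Nat.eq_zero_or_pos x with h | h
    · rw [h] at hXsum; omega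
    · exact h
  have hYpos : 0 < Y.card := by
    rcases Nat.eq_zero_or_pos Y.card with h | h
    · rw [h] at hYsum; omega
    · exact h
  refine ⟨?_, ?_, ?_, ?_⟩
  · intro u v huv
    rcases hbip u v huv with ⟨h1, h2⟩ | ⟨h1, h2⟩
    · exact Or.inl ⟨by simp [hX, h1], by simp [hY, h2]⟩
    · exact Or.inr ⟨by simp [hY, h1], by simp [hX, h2]⟩
  · by_contra h
    push_neg at h
    have : x * X.card ≤ x * Y.card := Nat.mul_le_mul_left x h
    have : x * Y.card < y * Y.card := Nat.mul_lt_mul_of_lt_of_le hxy le_rfl hYpos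
    omega
  · omega
  · omega
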